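/- The MacWilliams identity for symmetrized weight enumerators over ℤ₄ holds: for any ℤ₄-linear code C of length n, swe_C(a,b,c) = |C^⊥|^{-1} · swe_{C^⊥}(a+2b+c, a−c, a−2b+c). -/

import Mathlib

def dualZ4 {n : ℕ} (C : Set (Fin n → ZMod 4)) : Set (Fin n → ZMod 4) :=
  {x | ∀ y ∈ C, ∑ k, x k * y k = 0}

/-- Hamming weight of a binary word. -/
def wtH {n : ℕ} (c : Fin n → ZMod 2) : ℕ := (Finset.univ.filter (fun k => c k ≠ 0)).card

open Classical in
/-- Weight enumerator `W_A(x,y)` of a binary code. -/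
noncomputable def W {n : ℕ} (A : Set (Fin n → ZMod 2)) (x y : ℝ) : ℝ :=
  ∑ c ∈ Finset.univ.filter (· ∈ A), x ^ (n - wtH c) * y ^ (wtH c)

/-- `nI i c` counts coordinates of `c` equal to `i`. -/
def nI {n : ℕ} (i : ZMod 4) (c : Fin n → ZMod 4) : ℕ :=
  (Finset.univ.filter (fun k => c k = i)).card

open Classical in
/-- Symmetrized weight enumerator of a `ℤ₄`-code. -/
noncomputable def swe {n : ℕ} (C : Set (Fin n → ZMod 4)) (a b c : ℝ) : ℝ :=
  ∑ u ∈ Finset.univ.filter (· ∈ C), a ^ nI 0 u * b ^ (nI 1 u + nI 3 u) * c ^ nI 2 u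

/-!
For a subgroup `C ≤ (ℤ/N)^ι` and `g : ℤ/N → ℂ`, expanding `∏ₖ 𝓕 g (uₖ)` and summing over `u ∈ C`
produces the character sums `∑_{u ∈ C} e(-v ⬝ u)` (`e = ZMod.stdAddChar`), which are `|C|` or `0`
according as `v ∈ C^⊥` or not. This is Poisson summation `cwe_C(𝓕 g) = |C| · cwe_{C^⊥}(g)` for the complete weight
enumerator `cwe_S(g) = ∑_{u ∈ S} ∏ₖ g(uₖ)`. Taking `g = 1` gives `|C| · |C^⊥| = N^|ι|`; applying it
to `𝓕 g` and using Fourier inversion `𝓕 (𝓕 g) = N · g(-·)` turns it around into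
`cwe_C(g) = |C^⊥|⁻¹ · cwe_{C^⊥}(𝓕 g)`. The symmetrized weight enumerator is the case `N = 4`,
`g = (a, b, c, b)`, whose transform is `(a + 2b + c, a - c, a - 2b + c, a - c)`.
-/

open Finset ZMod

lemma AddChar.map_sum_eq_prod {ι A M : Type*} [AddCommMonoid A] [CommMonoid M]
    (ψ : AddChar A M) (s : Finset ι) (f : ι → A) : ψ (∑ i ∈ s, f i) = ∏ i ∈ s, ψ (f i) := by
  induction s using Finset.cons_induction with
  | empty => simp
  | cons i s hi ih => rw [sum_cons, prod_cons, map_add_eq_mul, ih]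

open Classical in
lemma AddChar.sum_addSubgroup_eq_ite {G R : Type*} [AddGroup G] [Fintype G] [CommRing R]
    [IsDomain R] (ψ : AddChar G R) (H : AddSubgroup G) :
    ∑ x ∈ univ.filter (· ∈ H), ψ x = if ∀ x ∈ H, ψ x = 1 then (Nat.card H : R) else 0 := by
  rw [sum_subtype (p := (· ∈ H)) _ (fun x => by simp), Nat.card_eq_fintype_card]
  refine (ψ.compAddMonoidHom H.subtype).sum_eq_ite.trans (if_congr ?_ rfl rfl)
  rw [AddChar.eq_zero_iff, Subtype.forall]
  rfl

lemma ZMod.stdAddChar_eq_one_iff {N : ℕ} [NeZero N] {x : ZMod N} :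
    stdAddChar x = 1 ↔ x = 0 := by
  rw [← (stdAddChar (N := N)).map_zero_eq_one, injective_stdAddChar.eq_iff]

lemma ZMod.dft_one {N : ℕ} [NeZero N] : 𝓕 (1 : ZMod N → ℂ) = Pi.single 0 (N : ℂ) := by
  ext k
  simp only [dft_apply, Pi.one_apply, smul_eq_mul, mul_one, Pi.single_apply]
  split_ifs with hk
  · simp [hk]
  · have := AddChar.sum_eq_zero_of_ne_one (isPrimitive_stdAddChar N (neg_ne_zero.mpr hk))
    simpa [AddChar.mulShift_apply, mul_comm] using this

def codeDual {ι : Type*} [Fintype ι] {N : ℕ} (S : Set (ι → ZMod N)) : Set (ι → ZMod N) :=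
  {x | ∀ y ∈ S, x ⬝ᵥ y = 0}

open Classical in
noncomputable def cwe {ι : Type*} [Fintype ι] [DecidableEq ι] {N : ℕ} [NeZero N]
    (S : Set (ι → ZMod N)) (g : ZMod N → ℂ) : ℂ :=
  ∑ u ∈ univ.filter (· ∈ S), ∏ k, g (u k)

section CompleteWeightEnumerator

variable {ι : Type*} [Fintype ι] [DecidableEq ι] {N : ℕ} [NeZero N]

lemma prod_dft_eq_sum (g : ZMod N → ℂ) (u : ι → ZMod N) :
    ∏ k, 𝓕 g (u k) = ∑ v, stdAddChar (-(v ⬝ᵥ u)) * ∏ k, g (v k) := by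
  simp only [dft_apply, smul_eq_mul, prod_univ_sum, Fintype.piFinset_univ, prod_mul_distrib,
    dotProduct, ← sum_neg_distrib, AddChar.map_sum_eq_prod]

open Classical in
lemma sum_stdAddChar_dotProduct (C : AddSubgroup (ι → ZMod N)) (v : ι → ZMod N) :
    ∑ u ∈ univ.filter (· ∈ C), stdAddChar (-(v ⬝ᵥ u)) =
      if v ∈ codeDual (C : Set (ι → ZMod N)) then (Nat.card C : ℂ) else 0 := by
  let ψ : AddChar (ι → ZMod N) ℂ := stdAddChar.compAddMonoidHom
    (AddMonoidHom.mk' (fun u => -(v ⬝ᵥ u)) fun u w => by rw [dotProduct_add, neg_add])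
  refine (ψ.sum_addSubgroup_eq_ite C).trans (if_congr ?_ rfl rfl)
  simp [ψ, stdAddChar_eq_one_iff, codeDual]

open Classical in
theorem cwe_dft (C : AddSubgroup (ι → ZMod N)) (g : ZMod N → ℂ) :
    cwe (C : Set (ι → ZMod N)) (𝓕 g) = Nat.card C * cwe (codeDual (C : Set (ι → ZMod N))) g := by
  calc cwe (C : Set (ι → ZMod N)) (𝓕 g)
      = ∑ v, (∑ u ∈ univ.filter (· ∈ C), stdAddChar (-(v ⬝ᵥ u))) * ∏ k, g (v k) := by
        simp only [cwe, prod_dft_eq_sum, sum_mul]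
        exact sum_comm
    _ = Nat.card C * cwe (codeDual (C : Set (ι → ZMod N))) g := by
        simp only [sum_stdAddChar_dotProduct, ite_mul, zero_mul, ← sum_filter, cwe, mul_sum]

lemma cwe_const_mul (S : Set (ι → ZMod N)) (c : ℂ) (g : ZMod N → ℂ) :
    cwe S (fun x => c * g x) = c ^ Fintype.card ι * cwe S g := by
  simp only [cwe, prod_mul_distrib, prod_const, card_univ, mul_sum]

lemma cwe_comp_neg (C : AddSubgroup (ι → ZMod N)) (g : ZMod N → ℂ) :
    cwe (C : Set (ι → ZMod N)) (fun x => g (-x)) = cwe (C : Set (ι → ZMod N)) g := by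
  unfold cwe
  exact sum_nbij' (- ·) (- ·) (by simp) (by simp) (by simp) (by simp) (by simp)

lemma cwe_one (S : Set (ι → ZMod N)) : cwe S 1 = Nat.card S := by
  classical
  simp [cwe]

lemma cwe_single_zero (C : AddSubgroup (ι → ZMod N)) (c : ℂ) :
    cwe (C : Set (ι → ZMod N)) (Pi.single 0 c) = c ^ Fintype.card ι := by
  have hzero (u : ι → ZMod N) : (∀ k ∈ univ, u k = 0) ↔ u = 0 := by simp [funext_iff]
  simp only [cwe, Pi.single_apply, prod_ite_zero, hzero, prod_const, card_univ]
  rw [sum_ite_eq']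
  simp [C.zero_mem]

theorem card_mul_card_codeDual (C : AddSubgroup (ι → ZMod N)) :
    Nat.card C * Nat.card (codeDual (C : Set (ι → ZMod N))) = N ^ Fintype.card ι := by
  have h := cwe_dft C 1
  rw [dft_one, cwe_single_zero, cwe_one] at h
  exact_mod_cast h.symm

theorem cwe_eq_inv_card_mul_cwe_dft (C : AddSubgroup (ι → ZMod N)) (g : ZMod N → ℂ) :
    cwe (C : Set (ι → ZMod N)) g =
      (Nat.card (codeDual (C : Set (ι → ZMod N))) : ℂ)⁻¹ *
        cwe (codeDual (C : Set (ι → ZMod N))) (𝓕 g) := by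
  set D := codeDual (C : Set (ι → ZMod N))
  have hinv := cwe_dft C (𝓕 g)
  simp only [dft_dft, smul_eq_mul] at hinv
  rw [cwe_const_mul, cwe_comp_neg] at hinv
  have hcard : (Nat.card C * Nat.card D : ℂ) = (N : ℂ) ^ Fintype.card ι := by
    exact_mod_cast card_mul_card_codeDual C
  have hN : (N : ℂ) ^ Fintype.card ι ≠ 0 := pow_ne_zero _ (Nat.cast_ne_zero.2 (NeZero.ne N))
  have hD : (Nat.card D : ℂ) ≠ 0 := right_ne_zero_of_mul (hcard ▸ hN)
  rw [eq_inv_mul_iff_mul_eq₀ hD]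
  apply mul_left_cancel₀ hN
  linear_combination (Nat.card D : ℂ) * hinv + cwe D (𝓕 g) * hcard

end CompleteWeightEnumerator

@[to_additive]
lemma ZMod.prod_univ_four {M : Type*} [CommMonoid M] (f : ZMod 4 → M) :
    ∏ t, f t = f 0 * f 1 * f 2 * f 3 :=
  Fin.prod_univ_four f

lemma ZMod.stdAddChar_eq_I_pow_val (j : ZMod 4) : stdAddChar j = Complex.I ^ j.val := by
  have h1 : stdAddChar (1 : ZMod 4) = Complex.I := by
    have := stdAddChar_coe (N := 4) 1
    push_cast at this
    rw [this]
    convert Complex.exp_pi_div_two_mul_I using 2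
    ring
  rw [← h1, ← AddChar.map_nsmul_eq_pow, nsmul_one, natCast_zmod_val]

def sweWeight (a b c : ℂ) : ZMod 4 → ℂ := ![a, b, c, b]

lemma dft_sweWeight (a b c : ℂ) :
    𝓕 (sweWeight a b c) = sweWeight (a + 2 * b + c) (a - c) (a - 2 * b + c) := by
  ext k
  simp only [dft_apply, sum_univ_four, stdAddChar_eq_I_pow_val, smul_eq_mul]
  obtain rfl | rfl | rfl | rfl : k = 0 ∨ k = 1 ∨ k = 2 ∨ k = 3 := by revert k; decide
  all_goals reduce_mod_char; simp [sweWeight, val_ofNat, val_one_eq_one_mod]; ring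

lemma prod_comp_eq_prod_pow_nI {n : ℕ} {M : Type*} [CommMonoid M] (h : ZMod 4 → M)
    (u : Fin n → ZMod 4) : ∏ k, h (u k) = ∏ t, h t ^ nI t u := by
  rw [← prod_fiberwise univ u]
  refine prod_congr rfl fun t _ => ?_
  rw [prod_congr rfl fun k hk => by rw [(mem_filter.1 hk).2], prod_const]
  rfl

lemma swe_eq_cwe {n : ℕ} (S : Set (Fin n → ZMod 4)) (a b c : ℝ) :
    (swe S a b c : ℂ) = cwe S (sweWeight a b c) := by
  simp only [swe, cwe, prod_comp_eq_prod_pow_nI]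
  push_cast
  refine sum_congr rfl fun u _ => ?_
  simp [prod_univ_four, sweWeight, pow_add]
  ring

lemma dualZ4_eq_codeDual {n : ℕ} (S : Set (Fin n → ZMod 4)) : dualZ4 S = codeDual S := rfl

theorem macwilliams_swe_z4 {n : ℕ} (C : AddSubgroup (Fin n → ZMod 4)) :
    ∀ a b c : ℝ,
      swe (C : Set (Fin n → ZMod 4)) a b c =
        (Nat.card (dualZ4 (C : Set (Fin n → ZMod 4))) : ℝ)⁻¹ *
          swe (dualZ4 (C : Set (Fin n → ZMod 4))) (a + 2*b + c) (a - c) (a - 2*b + c) := by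
  intro a b c
  apply Complex.ofReal_injective
  push_cast
  rw [dualZ4_eq_codeDual, swe_eq_cwe, swe_eq_cwe, cwe_eq_inv_card_mul_cwe_dft, dft_sweWeight]
  push_cast
  rfl
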